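/- Let V : ℝ^N → ℝ be three times continuously differentiable and let y : [0,T) → ℝ^N be a twice continuously differentiable solution of ÿ(s) = D²V(y(s)) ∇V(y(s)) whose initial velocity satisfies ẏ(0) = −∇V(y(0)). Then ẏ(s) = −∇V(y(s)) for all s ∈ [0,T); that is, the manifold M = {(x, −∇V(x)) : x ∈ ℝ^N} ⊂ ℝ^{2N} is invariant under the flow of the second-order equation. -/

import Mathlib

open MeasureTheory Filter Topology

noncomputable section

/-- Euclidean space `ℝ^N`. -/
abbrev Euc (N : ℕ) := EuclideanSpace ℝ (Fin N)

/-- The set of critical points of the potential `V`. -/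
def critSet {N : ℕ} (V : Euc N → ℝ) : Set (Euc N) := {x | gradient V x = 0}

/-- The Hessian `D²V(x)` of `V` at `x`, as the Fréchet derivative of the gradient. -/
def hess {N : ℕ} (V : Euc N → ℝ) (x : Euc N) : Euc N →L[ℝ] Euc N := fderiv ℝ (gradient V) x

/-- The Laplacian `ΔV(x)`, i.e. the trace of the Hessian. -/
def lapl {N : ℕ} (V : Euc N → ℝ) (x : Euc N) : ℝ :=
  LinearMap.trace ℝ (Euc N) (hess V x : Euc N →ₗ[ℝ] Euc N)

/-- The energy `J(y) = ∫_ℝ (½|ẏ|² + ½|∇V(y)|²) ds` of a path `y` with derivative `y'`. -/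
def energy {N : ℕ} (V : Euc N → ℝ) (y y' : ℝ → Euc N) : ℝ :=
  ∫ s, ((1:ℝ)/2 * ‖y' s‖^2 + 1/2 * ‖gradient V (y s)‖^2)

/-- `y ∈ X(xm, xp)`: a locally absolutely continuous path of bounded variation with
derivative `y'` in `L²(ℝ)` and limits `xm`/`xp` at `∓∞`. -/
structure IsTransitionPath {N : ℕ} (V : Euc N → ℝ) (xm xp : Euc N) (y y' : ℝ → Euc N) : Prop where
  ac : ∀ t, y t = y 0 + ∫ s in (0:ℝ)..t, y' s
  memL2 : MemLp y' 2 (volume : Measure ℝ)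
  bv : BoundedVariationOn y Set.univ
  tendsto_bot : Tendsto y atBot (𝓝 xm)
  tendsto_top : Tendsto y atTop (𝓝 xp)

/-- The transition energy `Φ(xm,xp) = inf {J(y) | y ∈ X(xm,xp)}`. -/
def Phi {N : ℕ} (V : Euc N → ℝ) (xm xp : Euc N) : ℝ :=
  sInf {r | ∃ y y', IsTransitionPath V xm xp y y' ∧ r = energy V y y'}

/-- `V` is admissible: `C³`, finitely many critical points, nondegenerate Hessian at
every critical point, and weakly coercive. -/
def Admissible {N : ℕ} (V : Euc N → ℝ) : Prop :=
  ContDiff ℝ 3 V ∧ (critSet V).Finite ∧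
  (∀ x ∈ critSet V, ∀ v : Euc N, hess V x v = 0 → v = 0) ∧
  ∃ R > 0, ∃ c > 0, ∀ x : Euc N, R < ‖x‖ → c ≤ ‖gradient V x‖

open Set

/-!
Along a solution put `w = ẏ + ∇V(y)`. Differentiating and using the equation,
`ẇ = D²V(y) ∇V(y) + D²V(y) ẏ = D²V(y) w`, a linear equation with `w(0) = 0`;
since `D²V(y)` is bounded on compact subintervals, Grönwall's inequality forces `w ≡ 0`.
-/

theorem ContDiff.gradient {F : Type*} [NormedAddCommGroup F] [InnerProductSpace ℝ F]
    [CompleteSpace F] {f : F → ℝ} {n : WithTop ℕ∞} (hf : ContDiff ℝ (n + 1) f) :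
    ContDiff ℝ n (gradient f) :=
  (InnerProductSpace.toDual ℝ F).symm.contDiff.comp (hf.fderiv_right le_rfl)

theorem eqOn_zero_of_hasDerivWithinAt_clm_apply {E : Type*} [NormedAddCommGroup E]
    [NormedSpace ℝ E] {A : ℝ → E →L[ℝ] E} {w : ℝ → E} {a b : ℝ}
    (hA : ContinuousOn A (Ico a b))
    (hw : ∀ t ∈ Ico a b, HasDerivWithinAt w (A t (w t)) (Ico a b) t) (ha : w a = 0) :
    EqOn w 0 (Ico a b) := by
  intro s hs
  have hsub : Icc a s ⊆ Ico a b := Icc_subset_Ico_right hs.2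
  obtain ⟨K, hK⟩ := isCompact_Icc.exists_bound_of_continuousOn (hA.mono hsub)
  have hwcont : ContinuousOn w (Ico a b) := fun t ht => (hw t ht).continuousWithinAt
  have hbound : ∀ t ∈ Icc a s, ‖w t‖ ≤ gronwallBound 0 K 0 (t - a) := by
    refine norm_le_gronwallBound_of_norm_deriv_right_le (f' := fun t => A t (w t))
      (hwcont.mono hsub) ?_ (by simp [ha]) ?_
    · intro t ht
      have htb : t ∈ Ico a b := hsub (Ico_subset_Icc_self ht)
      exact (hw t htb).mono_of_mem_nhdsWithin (Ico_mem_nhdsGE_of_mem htb)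
    · intro t ht
      calc ‖A t (w t)‖ ≤ ‖A t‖ * ‖w t‖ := (A t).le_opNorm _
        _ ≤ K * ‖w t‖ + 0 := by
          rw [add_zero]
          gcongr
          exact hK t (Ico_subset_Icc_self ht)
  simpa [gronwallBound_ε0_δ0] using hbound s ⟨hs.1, le_rfl⟩

theorem hasDerivWithinAt_add_gradient_comp {N : ℕ} {V : Euc N → ℝ} {y y' : ℝ → Euc N}
    {s : Set ℝ} {t : ℝ} (hV : DifferentiableAt ℝ (gradient V) (y t))
    (hy : HasDerivWithinAt y (y' t) s t)
    (hy' : HasDerivWithinAt y' (hess V (y t) (gradient V (y t))) s t) :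
    HasDerivWithinAt (fun u => y' u + gradient V (y u))
      (hess V (y t) (y' t + gradient V (y t))) s t := by
  have hgrad : HasDerivWithinAt (fun u => gradient V (y u)) (hess V (y t) (y' t)) s t :=
    hV.hasFDerivAt.comp_hasDerivWithinAt t hy
  exact (hy'.add hgrad).congr_deriv (by rw [map_add, add_comm])

theorem statement6_general {N : ℕ} (V : Euc N → ℝ) (hV : ContDiff ℝ 3 V)
    (T : ℝ)
    (y y' y'' : ℝ → Euc N)
    (hy : ∀ s ∈ Set.Ico (0:ℝ) T, HasDerivWithinAt y (y' s) (Set.Ico (0:ℝ) T) s)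
    (hy' : ∀ s ∈ Set.Ico (0:ℝ) T, HasDerivWithinAt y' (y'' s) (Set.Ico (0:ℝ) T) s)
    (heq : ∀ s ∈ Set.Ico (0:ℝ) T, y'' s = hess V (y s) (gradient V (y s)))
    (hinit : y' 0 = -(gradient V (y 0))) :
    ∀ s ∈ Set.Ico (0:ℝ) T, y' s = -(gradient V (y s)) := by
  have hgrad : ContDiff ℝ 1 (gradient V) := (hV.of_le (by norm_num)).gradient
  have hhess : ContinuousOn (fun s => hess V (y s)) (Ico 0 T) :=
    (hgrad.continuous_fderiv one_ne_zero).comp_continuousOn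
      fun s hs => (hy s hs).continuousWithinAt
  have hw : EqOn (fun s => y' s + gradient V (y s)) 0 (Ico 0 T) := by
    refine eqOn_zero_of_hasDerivWithinAt_clm_apply hhess (fun s hs => ?_) (by simp [hinit])
    exact hasDerivWithinAt_add_gradient_comp (hgrad.differentiable one_ne_zero _) (hy s hs)
      (heq s hs ▸ hy' s hs)
  exact fun s hs => eq_neg_of_add_eq_zero_left (hw hs)

/-- the manifold `M = {(x, −∇V(x))}` is invariant: a `C²` solution of
`ÿ = D²V(y)∇V(y)` on `[0,T)` with `ẏ(0) = −∇V(y(0))` satisfies `ẏ(s) = −∇V(y(s))`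
on all of `[0,T)`. -/
theorem statement6 {N : ℕ} (V : Euc N → ℝ) (hV : ContDiff ℝ 3 V)
    (T : ℝ) (hT : 0 < T)
    (y y' y'' : ℝ → Euc N)
    (hy : ∀ s ∈ Set.Ico (0:ℝ) T, HasDerivWithinAt y (y' s) (Set.Ico (0:ℝ) T) s)
    (hy' : ∀ s ∈ Set.Ico (0:ℝ) T, HasDerivWithinAt y' (y'' s) (Set.Ico (0:ℝ) T) s)
    (hy''cont : ContinuousOn y'' (Set.Ico (0:ℝ) T))
    (heq : ∀ s ∈ Set.Ico (0:ℝ) T, y'' s = hess V (y s) (gradient V (y s)))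
    (hinit : y' 0 = -(gradient V (y 0))) :
    ∀ s ∈ Set.Ico (0:ℝ) T, y' s = -(gradient V (y s)) :=
  statement6_general V hV T y y' y'' hy hy' heq hinit
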